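/- Let h₃ = h₃(x¹,x²,y³), h₄ = h₄(x¹,x²,y³) and ḣ₄ = ḣ₄(x¹,x²,y⁴) be C² and nowhere zero, and consider the vertical 2×2 diagonal metric block g₃₃ = h₃, g₄₄ = h₄·ḣ₄, g₃₄ = 0 in the coordinates (y³,y⁴). Define Ĉ^a_{bc} = (1/2) g^{ad}(∂_c g_{bd} + ∂_b g_{cd} − ∂_d g_{bc}) (indices a,b,c,d ∈ {3,4}, ∂₃ = ∂/∂y³, ∂₄ = ∂/∂y⁴) and the vertical Ricci tensor R̂_{bc} = ∂_a Ĉ^a_{bc} − ∂_c Ĉ^a_{ba} + Ĉ^e_{bc} Ĉ^a_{ea} − Ĉ^e_{ba} Ĉ^a_{ec}. Then R̂₃₃/g₃₃ = R̂₄₄/g₄₄ = −(1/(2 h₃ h₄)) [ h₄** − (h₄*)²/(2 h₄) − (h₃* h₄*)/(2 h₃) ], where a* = ∂a/∂y³. In particular the result is independent of the factor ḣ₄(x¹,x²,y⁴), which is the 'effective Killing symmetry' property of the ansatz (equation (eq2b) of the decoupling Theorem 2.6). -/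

import Mathlib

/- STATEMENT 10 (vertical equation (eq2b) of Theorem 2.6, with the 'effective
Killing symmetry'): for the vertical diagonal metric block g₃₃ = h₃(y³),
g₄₄ = h₄(y³)·ḣ₄(y⁴), one has R̂₃₃/g₃₃ = R̂₄₄/g₄₄
= −(1/(2h₃h₄))[h₄** − (h₄*)²/(2h₄) − h₃*h₄*/(2h₃)], independently of ḣ₄.
Coordinates (y³,y⁴) are indexed by `Fin 2` (0 ↦ y³, 1 ↦ y⁴); the parameters
x¹,x² are fixed, so h₃, h₄, ḣ₄ are one-variable functions. -/

noncomputable section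

/-- Partial derivative `∂ f` on ℝ² with coordinates (y³,y⁴). -/
def pd (k : Fin 2) (f : (Fin 2 → ℝ) → ℝ) (u : Fin 2 → ℝ) : ℝ :=
  fderiv ℝ f u (Pi.single k 1)

/-- The vertical metric block `diag(h₃(y³), h₄(y³)·ḣ₄(y⁴))`. -/
def vg (h₃ h₄ hb₄ : ℝ → ℝ) (a b : Fin 2) (u : Fin 2 → ℝ) : ℝ :=
  if a = b then (if a = 0 then h₃ (u 0) else h₄ (u 0) * hb₄ (u 1)) else 0

/-- Its pointwise inverse. -/
def vgInv (h₃ h₄ hb₄ : ℝ → ℝ) (a b : Fin 2) (u : Fin 2 → ℝ) : ℝ :=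
  if a = b then (if a = 0 then (h₃ (u 0))⁻¹ else (h₄ (u 0) * hb₄ (u 1))⁻¹) else 0

/-- `Ĉ^a_{bc} = (1/2) g^{ad}(∂_c g_{bd} + ∂_b g_{cd} − ∂_d g_{bc})`. -/
def Chat (h₃ h₄ hb₄ : ℝ → ℝ) (a b c : Fin 2) (u : Fin 2 → ℝ) : ℝ :=
  (1/2) * ∑ d : Fin 2, vgInv h₃ h₄ hb₄ a d u *
    (pd c (vg h₃ h₄ hb₄ b d) u + pd b (vg h₃ h₄ hb₄ c d) u - pd d (vg h₃ h₄ hb₄ b c) u)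

/-- Vertical Ricci tensor
`R̂_{bc} = ∂_a Ĉ^a_{bc} − ∂_c Ĉ^a_{ba} + Ĉ^e_{bc} Ĉ^a_{ea} − Ĉ^e_{ba} Ĉ^a_{ec}`. -/
def RicV (h₃ h₄ hb₄ : ℝ → ℝ) (b c : Fin 2) (u : Fin 2 → ℝ) : ℝ :=
  (∑ a : Fin 2, pd a (Chat h₃ h₄ hb₄ a b c) u)
    - pd c (fun v => ∑ a : Fin 2, Chat h₃ h₄ hb₄ a b a v) u
    + (∑ e : Fin 2, ∑ a : Fin 2, Chat h₃ h₄ hb₄ e b c u * Chat h₃ h₄ hb₄ a e a u)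
    - ∑ e : Fin 2, ∑ a : Fin 2, Chat h₃ h₄ hb₄ e b a u * Chat h₃ h₄ hb₄ a e c u

/-! In dimension two the Ricci tensor of any metric is `K g`, with `K` the Gaussian curvature,
so both ratios equal `K`. For this diagonal block the only Christoffel symbol carrying a
`y⁴`-derivative is `Ĉ⁴₄₄ = ḣ₄°/(2ḣ₄)`, and it drops out of `R̂₃₃` and `R̂₄₄`;
otherwise `ḣ₄` enters only through `Ĉ³₄₄ = -ḣ₄ h₄*/(2h₃)`, i.e. as the factor `g₄₄` of `R̂₄₄`.
Geometrically, `ḣ₄` is absorbed by reparametrising `y⁴`. -/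

lemma hasDerivAt_deriv_div_two_mul {f g : ℝ → ℝ} {s : ℝ} (hf : DifferentiableAt ℝ (deriv f) s)
    (hg : DifferentiableAt ℝ g s) (hg0 : g s ≠ 0) :
    HasDerivAt (fun y => deriv f y / (2 * g y))
      ((deriv (deriv f) s * g s - deriv f s * deriv g s) / (2 * g s ^ 2)) s := by
  refine (hf.hasDerivAt.fun_div (hg.hasDerivAt.const_mul 2)
    (mul_ne_zero two_ne_zero hg0)).congr_deriv ?_
  field_simp

section PartialDerivative

variable {k : Fin 2} {f g : (Fin 2 → ℝ) → ℝ} {u : Fin 2 → ℝ}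

lemma pd_const (c : ℝ) : pd k (fun _ => c) u = 0 := by
  simp [pd]

lemma pd_add (hf : DifferentiableAt ℝ f u) (hg : DifferentiableAt ℝ g u) :
    pd k (fun v => f v + g v) u = pd k f u + pd k g u := by
  simp [pd, fderiv_fun_add hf hg]

lemma pd_mul (hf : DifferentiableAt ℝ f u) (hg : DifferentiableAt ℝ g u) :
    pd k (fun v => f v * g v) u = pd k f u * g u + f u * pd k g u := by
  simp only [pd, fderiv_fun_mul hf hg, add_apply, smul_apply, smul_eq_mul]
  ring

lemma differentiableAt_comp_apply {φ : ℝ → ℝ} (j : Fin 2) (hφ : DifferentiableAt ℝ φ (u j)) :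
    DifferentiableAt ℝ (fun v : Fin 2 → ℝ => φ (v j)) u :=
  hφ.comp u (differentiableAt_apply j u)

lemma pd_comp_apply {φ : ℝ → ℝ} (j : Fin 2) (hφ : DifferentiableAt ℝ φ (u j)) :
    pd k (fun v => φ (v j)) u = if k = j then deriv φ (u j) else 0 := by
  have hφ' : HasFDerivAt (fun v : Fin 2 → ℝ => φ (v j))
      (deriv φ (u j) • ContinuousLinearMap.proj (R := ℝ) (φ := fun _ : Fin 2 => ℝ) j) u :=
    hφ.hasDerivAt.comp_hasFDerivAt u (hasFDerivAt_apply j u)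
  rw [pd, hφ'.fderiv]
  by_cases hkj : k = j <;> simp [hkj]

lemma pd_comp_zero_mul_comp_one {φ ψ : ℝ → ℝ} (hφ : DifferentiableAt ℝ φ (u 0))
    (hψ : DifferentiableAt ℝ ψ (u 1)) :
    pd k (fun v => φ (v 0) * ψ (v 1)) u =
      if k = 0 then deriv φ (u 0) * ψ (u 1) else φ (u 0) * deriv ψ (u 1) := by
  rw [pd_mul (differentiableAt_comp_apply 0 hφ) (differentiableAt_comp_apply 1 hψ),
    pd_comp_apply 0 hφ, pd_comp_apply 1 hψ]
  fin_cases k <;> simp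

end PartialDerivative

section DiagonalMetric

variable {h₃ h₄ hb₄ : ℝ → ℝ} {k : Fin 2} {u : Fin 2 → ℝ}

lemma vg_zero_zero : vg h₃ h₄ hb₄ 0 0 u = h₃ (u 0) := rfl

lemma vg_one_one : vg h₃ h₄ hb₄ 1 1 u = h₄ (u 0) * hb₄ (u 1) := rfl

lemma vg_of_ne {a b : Fin 2} (hab : a ≠ b) : vg h₃ h₄ hb₄ a b u = 0 := if_neg hab

lemma pd_vg_zero_zero (hd₃ : Differentiable ℝ h₃) :
    pd k (vg h₃ h₄ hb₄ 0 0) u = if k = 0 then deriv h₃ (u 0) else 0 :=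
  pd_comp_apply 0 (hd₃ _)

lemma pd_vg_one_one (hd₄ : Differentiable ℝ h₄) (hdb₄ : Differentiable ℝ hb₄) :
    pd k (vg h₃ h₄ hb₄ 1 1) u =
      if k = 0 then deriv h₄ (u 0) * hb₄ (u 1) else h₄ (u 0) * deriv hb₄ (u 1) :=
  pd_comp_zero_mul_comp_one (hd₄ _) (hdb₄ _)

lemma pd_vg_of_ne {a b : Fin 2} (hab : a ≠ b) :
    pd k (vg h₃ h₄ hb₄ a b) u = 0 := by
  have hvg : vg h₃ h₄ hb₄ a b = fun _ => 0 := funext fun _ => vg_of_ne hab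
  rw [hvg, pd_const]

lemma chat_eq_of_diag (a b c : Fin 2) :
    Chat h₃ h₄ hb₄ a b c u = (pd c (vg h₃ h₄ hb₄ b a) u + pd b (vg h₃ h₄ hb₄ c a) u
      - pd a (vg h₃ h₄ hb₄ b c) u) / (2 * vg h₃ h₄ hb₄ a a u) := by
  rw [Chat, Fin.sum_univ_two]
  fin_cases a <;>
    simp only [vgInv, vg, Fin.zero_eta, Fin.mk_one, ↓reduceIte, zero_ne_one, one_ne_zero,
      zero_mul, add_zero, zero_add] <;>
    ring

lemma chat_zero_zero_zero (hd₃ : Differentiable ℝ h₃) :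
    Chat h₃ h₄ hb₄ 0 0 0 = fun v => deriv h₃ (v 0) / (2 * h₃ (v 0)) := by
  funext v
  simp [chat_eq_of_diag, pd_vg_zero_zero hd₃, vg_zero_zero]

lemma chat_zero_zero_one (hd₃ : Differentiable ℝ h₃) : Chat h₃ h₄ hb₄ 0 0 1 = fun _ => 0 := by
  funext v
  simp [chat_eq_of_diag, pd_vg_zero_zero hd₃, pd_vg_of_ne]

lemma chat_zero_one_zero (hd₃ : Differentiable ℝ h₃) : Chat h₃ h₄ hb₄ 0 1 0 = fun _ => 0 := by
  funext v
  simp [chat_eq_of_diag, pd_vg_zero_zero hd₃, pd_vg_of_ne]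

lemma chat_zero_one_one (hd₄ : Differentiable ℝ h₄) (hdb₄ : Differentiable ℝ hb₄) :
    Chat h₃ h₄ hb₄ 0 1 1 = fun v => -(deriv h₄ (v 0) / (2 * h₃ (v 0))) * hb₄ (v 1) := by
  funext v
  rw [chat_eq_of_diag, pd_vg_of_ne one_ne_zero, pd_vg_one_one hd₄ hdb₄, if_pos rfl, vg_zero_zero]
  ring

lemma chat_one_zero_zero (hd₃ : Differentiable ℝ h₃) : Chat h₃ h₄ hb₄ 1 0 0 = fun _ => 0 := by
  funext v
  simp [chat_eq_of_diag, pd_vg_zero_zero hd₃, pd_vg_of_ne]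

lemma chat_one_zero_one (hd₄ : Differentiable ℝ h₄) (hdb₄ : Differentiable ℝ hb₄)
    (hb₄0 : ∀ s, hb₄ s ≠ 0) :
    Chat h₃ h₄ hb₄ 1 0 1 = fun v => deriv h₄ (v 0) / (2 * h₄ (v 0)) := by
  funext v
  rw [chat_eq_of_diag, pd_vg_of_ne zero_ne_one, pd_vg_one_one hd₄ hdb₄, if_pos rfl, vg_one_one]
  field_simp [hb₄0 (v 1)]
  ring

lemma chat_one_one_zero (hd₄ : Differentiable ℝ h₄) (hdb₄ : Differentiable ℝ hb₄)
    (hb₄0 : ∀ s, hb₄ s ≠ 0) :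
    Chat h₃ h₄ hb₄ 1 1 0 = fun v => deriv h₄ (v 0) / (2 * h₄ (v 0)) := by
  funext v
  rw [chat_eq_of_diag, pd_vg_of_ne zero_ne_one, pd_vg_of_ne one_ne_zero, pd_vg_one_one hd₄ hdb₄,
    if_pos rfl, vg_one_one]
  field_simp [hb₄0 (v 1)]
  ring

lemma chat_one_one_one (hd₄ : Differentiable ℝ h₄) (hdb₄ : Differentiable ℝ hb₄)
    (h₄0 : ∀ s, h₄ s ≠ 0) :
    Chat h₃ h₄ hb₄ 1 1 1 = fun v => deriv hb₄ (v 1) / (2 * hb₄ (v 1)) := by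
  funext v
  rw [chat_eq_of_diag, pd_vg_one_one hd₄ hdb₄, if_neg one_ne_zero, vg_one_one]
  field_simp [h₄0 (v 0)]
  ring

def verticalGaussCurvature (h₃ h₄ : ℝ → ℝ) (s : ℝ) : ℝ :=
  -(1 / (2 * h₃ s * h₄ s)) * (deriv (deriv h₄) s - deriv h₄ s ^ 2 / (2 * h₄ s)
    - deriv h₃ s * deriv h₄ s / (2 * h₃ s))

lemma ricV_zero_zero (hh₃ : ContDiff ℝ 2 h₃) (hh₄ : ContDiff ℝ 2 h₄)
    (hdb₄ : Differentiable ℝ hb₄) (h₃0 : ∀ s, h₃ s ≠ 0) (h₄0 : ∀ s, h₄ s ≠ 0)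
    (hb₄0 : ∀ s, hb₄ s ≠ 0) :
    RicV h₃ h₄ hb₄ 0 0 u = vg h₃ h₄ hb₄ 0 0 u * verticalGaussCurvature h₃ h₄ (u 0) := by
  have hd₃ := hh₃.differentiable two_ne_zero
  have hd₄ := hh₄.differentiable two_ne_zero
  -- `∂₃ Ĉ³₃₃` occurs twice and cancels, so only the differentiability part of `hA` is used
  have hA := hasDerivAt_deriv_div_two_mul (hh₃.differentiable_deriv_two (u 0)) (hd₃ _) (h₃0 _)
  have hB := hasDerivAt_deriv_div_two_mul (hh₄.differentiable_deriv_two (u 0)) (hd₄ _) (h₄0 _)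
  simp only [RicV, Fin.sum_univ_two, chat_zero_zero_zero hd₃, chat_zero_zero_one hd₃,
    chat_zero_one_zero hd₃, chat_one_zero_zero hd₃, chat_one_zero_one hd₄ hdb₄ hb₄0,
    chat_one_one_zero hd₄ hdb₄ hb₄0, pd_const]
  rw [pd_add (differentiableAt_comp_apply 0 hA.differentiableAt)
    (differentiableAt_comp_apply 0 hB.differentiableAt), pd_comp_apply 0 hB.differentiableAt,
    if_pos rfl, hB.deriv]
  simp only [vg_zero_zero, verticalGaussCurvature]
  field_simp [h₃0 (u 0), h₄0 (u 0)]
  ring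

lemma ricV_one_one (hh₃ : ContDiff ℝ 2 h₃) (hh₄ : ContDiff ℝ 2 h₄)
    (hdb₄ : Differentiable ℝ hb₄) (h₃0 : ∀ s, h₃ s ≠ 0) (h₄0 : ∀ s, h₄ s ≠ 0)
    (hb₄0 : ∀ s, hb₄ s ≠ 0) :
    RicV h₃ h₄ hb₄ 1 1 u = vg h₃ h₄ hb₄ 1 1 u * verticalGaussCurvature h₃ h₄ (u 0) := by
  have hd₃ := hh₃.differentiable two_ne_zero
  have hd₄ := hh₄.differentiable two_ne_zero
  have hC := (hasDerivAt_deriv_div_two_mul (hh₄.differentiable_deriv_two (u 0)) (hd₃ _)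
      (h₃0 _)).fun_neg
  simp only [RicV, Fin.sum_univ_two, chat_zero_zero_zero hd₃, chat_zero_zero_one hd₃,
    chat_zero_one_zero hd₃, chat_zero_one_one hd₄ hdb₄, chat_one_zero_one hd₄ hdb₄ hb₄0,
    chat_one_one_zero hd₄ hdb₄ hb₄0, chat_one_one_one hd₄ hdb₄ h₄0, zero_add]
  rw [pd_comp_zero_mul_comp_one hC.differentiableAt (hdb₄ _), if_pos rfl, hC.deriv]
  simp only [vg_one_one, verticalGaussCurvature]
  field_simp [h₃0 (u 0), h₄0 (u 0), hb₄0 (u 1)]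
  ring

end DiagonalMetric

theorem vertical_ricci_effective_killing
    (h₃ h₄ hb₄ : ℝ → ℝ)
    (hh₃ : ContDiff ℝ 2 h₃) (hh₄ : ContDiff ℝ 2 h₄) (hhb₄ : ContDiff ℝ 2 hb₄)
    (hh₃0 : ∀ s, h₃ s ≠ 0) (hh₄0 : ∀ s, h₄ s ≠ 0) (hhb₄0 : ∀ s, hb₄ s ≠ 0) :
    ∀ u : Fin 2 → ℝ,
      RicV h₃ h₄ hb₄ 0 0 u / (h₃ (u 0))
        = -(1 / (2 * h₃ (u 0) * h₄ (u 0))) *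
            (deriv (deriv h₄) (u 0) - (deriv h₄ (u 0)) ^ 2 / (2 * h₄ (u 0))
              - deriv h₃ (u 0) * deriv h₄ (u 0) / (2 * h₃ (u 0))) ∧
      RicV h₃ h₄ hb₄ 1 1 u / (h₄ (u 0) * hb₄ (u 1))
        = -(1 / (2 * h₃ (u 0) * h₄ (u 0))) *
            (deriv (deriv h₄) (u 0) - (deriv h₄ (u 0)) ^ 2 / (2 * h₄ (u 0))
              - deriv h₃ (u 0) * deriv h₄ (u 0) / (2 * h₃ (u 0))) := by
  intro u
  have hdb₄ := hhb₄.differentiable two_ne_zero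
  rw [ricV_zero_zero hh₃ hh₄ hdb₄ hh₃0 hh₄0 hhb₄0, ricV_one_one hh₃ hh₄ hdb₄ hh₃0 hh₄0 hhb₄0,
    vg_zero_zero, vg_one_one]
  exact ⟨mul_div_cancel_left₀ _ (hh₃0 _), mul_div_cancel_left₀ _ (mul_ne_zero (hh₄0 _) (hhb₄0 _))⟩

end
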